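/- arXiv:1306.2914 — 2 statements merged into one kernel-verified Lean document; each statement's English description precedes it below -/
import Mathlib

section
/- Let ω ∈ ℂ and let v : [-b,b] → ℂ be twice continuously differentiable with v'' + ω²·v = 0 on [-b,b]. Then the function u := T v (i.e., u(x) = v(x) + ∫_{−x}^{x} K(x,t)·v(t) dt) is twice continuously differentiable on [-b,b] and satisfies u'' − q·u + ω²·u = 0 on [-b,b], together with the initial conditions u(0) = v(0) and u'(0) = v'(0) + h·v(0). -/
open Set MeasureTheory Filter

/-- Second partial derivative with respect to the first variable, within `[-b,b]`. -/
noncomputable def d2x (b : ℝ) (K : ℝ → ℝ → ℂ) (x t : ℝ) : ℂ :=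
  derivWithin (fun x' => derivWithin (fun x'' => K x'' t) (Set.Icc (-b) b) x') (Set.Icc (-b) b) x

/-- Second partial derivative with respect to the second variable, within `[-b,b]`. -/
noncomputable def d2t (b : ℝ) (K : ℝ → ℝ → ℂ) (x t : ℝ) : ℂ :=
  derivWithin (fun t' => derivWithin (fun t'' => K x t'') (Set.Icc (-b) b) t') (Set.Icc (-b) b) t

/-- `K` is a transmutation kernel for `(q, h)` on `[-b,b]`: it is twice continuously
differentiable, satisfies `∂²K/∂x² − q(x)K = ∂²K/∂t²` on `[-b,b]²`, and the Goursat data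
`K(x,x) = h/2 + (1/2)∫₀ˣ q` and `K(x,−x) = h/2`. -/
def IsTransmutationKernel (b : ℝ) (q : ℝ → ℂ) (h : ℂ) (K : ℝ → ℝ → ℂ) : Prop :=
  ContDiffOn ℝ 2 (fun p : ℝ × ℝ => K p.1 p.2) (Set.Icc (-b) b ×ˢ Set.Icc (-b) b) ∧
  (∀ x ∈ Set.Icc (-b) b, ∀ t ∈ Set.Icc (-b) b, d2x b K x t - q x * K x t = d2t b K x t) ∧
  (∀ x ∈ Set.Icc (-b) b, K x x = h / 2 + (1 / 2) * ∫ s in (0:ℝ)..x, q s) ∧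
  (∀ x ∈ Set.Icc (-b) b, K x (-x) = h / 2)

/-!
Differentiating `T v (x) = v x + ∫_{-x}^{x} K(x,t) v(t) dt` twice under the integral sign
produces `v''`, boundary terms on the diagonals `t = ±x`, and `∫ ∂ₓ²K · v`. The kernel equation
turns the latter into `q ∫ K v + ∫ ∂ₜ²K · v`, and integrating by parts twice (Lagrange's
identity) moves `∂ₜ²` onto `v`, where `v'' = -ω² v`. Differentiating the Goursat data gives
`(∂ₓ + ∂ₜ)K(x,x) = q(x)/2` and `(∂ₓ - ∂ₜ)K(x,-x) = 0`, which collapse all boundary terms to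
`q v`, so `(T v)'' = (q - ω²) T v`; as the right-hand side is continuous, `T v` is `C²`.
-/

open Function Topology

section Calculus

variable {E : Type*} [NormedAddCommGroup E] [NormedSpace ℝ E]

theorem contDiffOn_two_of_hasDerivWithinAt {s : Set ℝ} {f f' f'' : ℝ → E}
    (hs : UniqueDiffOn ℝ s) (hf : ∀ x ∈ s, HasDerivWithinAt f (f' x) s x)
    (hf' : ∀ x ∈ s, HasDerivWithinAt f' (f'' x) s x) (hf'' : ContinuousOn f'' s) :
    ContDiffOn ℝ 2 f s := by
  rw [show (2 : WithTop ℕ∞) = 1 + 1 from rfl, contDiffOn_succ_iff_derivWithin hs]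
  refine ⟨fun x hx => (hf x hx).differentiableWithinAt, by simp, ?_⟩
  refine ContDiffOn.congr ?_ fun x hx => (hf x hx).derivWithin (hs x hx)
  exact (contDiffOn_one_iff_derivWithin hs).2 ⟨fun x hx => (hf' x hx).differentiableWithinAt,
    hf''.congr fun x hx => (hf' x hx).derivWithin (hs x hx)⟩

theorem neg_mem_Icc_neg_self {b x : ℝ} (hx : x ∈ Icc (-b) b) : -x ∈ Icc (-b) b := by
  rwa [neg_mem_Icc_iff, neg_neg]

theorem uIcc_neg_self_subset_Icc {b x : ℝ} (hx : x ∈ Icc (-b) b) : uIcc (-x) x ⊆ Icc (-b) b :=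
  uIcc_subset_Icc (neg_mem_Icc_neg_self hx) hx

variable [CompleteSpace E]

theorem hasDerivWithinAt_integral_Icc {g : ℝ → E} {a b c x : ℝ}
    (hg : ContinuousOn g (Icc a b)) (hc : c ∈ Icc a b) (hx : x ∈ Icc a b) :
    HasDerivWithinAt (fun y => ∫ t in c..y, g t) (g x) (Icc a b) x := by
  have : Fact (x ∈ Icc a b) := ⟨hx⟩
  exact intervalIntegral.integral_hasDerivWithinAt_right
    ((hg.mono (uIcc_subset_Icc hc hx)).intervalIntegrable)
    (hg.stronglyMeasurableAtFilter_nhdsWithin measurableSet_Icc x) (hg x hx)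

theorem hasDerivWithinAt_integral_neg_self {g : ℝ → E} {b x : ℝ}
    (hg : ContinuousOn g (Icc (-b) b)) (hx : x ∈ Icc (-b) b) :
    HasDerivWithinAt (fun y => ∫ t in (-y)..y, g t) (g x + g (-x)) (Icc (-b) b) x := by
  have hlower : HasDerivWithinAt (fun y => ∫ t in x..(-y), g t) (-g (-x)) (Icc (-b) b) x := by
    simpa [Function.comp_def] using
      (hasDerivWithinAt_integral_Icc hg hx (neg_mem_Icc_neg_self hx)).scomp x
        (hasDerivWithinAt_neg x _) fun y hy => neg_mem_Icc_neg_self hy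
  have hint : ∀ y ∈ Icc (-b) b, ∀ z ∈ Icc (-b) b, IntervalIntegrable g volume y z :=
    fun y hy z hz => (hg.mono (uIcc_subset_Icc hy hz)).intervalIntegrable
  have hsplit : ∀ y ∈ Icc (-b) b,
      ∫ t in (-y)..y, g t = (∫ t in x..y, g t) - ∫ t in x..(-y), g t := fun y hy =>
    (intervalIntegral.integral_interval_sub_left (hint x hx y hy)
      (hint x hx _ (neg_mem_Icc_neg_self hy))).symm
  rw [← sub_neg_eq_add]
  exact ((hasDerivWithinAt_integral_Icc hg hx hx).sub hlower).congr hsplit (hsplit x hx)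

theorem integral_secondDeriv_mul_sub_mul_secondDeriv {A : Type*} [NormedCommRing A]
    [NormedAlgebra ℝ A] [CompleteSpace A] {f f' f'' g g' g'' : ℝ → A} {a b : ℝ}
    (hf : ∀ x ∈ uIcc a b, HasDerivWithinAt f (f' x) (uIcc a b) x)
    (hf' : ∀ x ∈ uIcc a b, HasDerivWithinAt f' (f'' x) (uIcc a b) x)
    (hg : ∀ x ∈ uIcc a b, HasDerivWithinAt g (g' x) (uIcc a b) x)
    (hg' : ∀ x ∈ uIcc a b, HasDerivWithinAt g' (g'' x) (uIcc a b) x)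
    (hf'' : ContinuousOn f'' (uIcc a b)) (hg'' : ContinuousOn g'' (uIcc a b)) :
    ∫ x in a..b, (f'' x * g x - f x * g'' x)
      = (f' b * g b - f b * g' b) - (f' a * g a - f a * g' a) := by
  have hW : ∀ x ∈ uIcc a b, HasDerivWithinAt (fun y => f' y * g y - f y * g' y)
      (f'' x * g x - f x * g'' x) (uIcc a b) x := fun x hx =>
    (((hf' x hx).mul (hg x hx)).sub ((hf x hx).mul (hg' x hx))).congr_deriv (by ring)
  refine intervalIntegral.integral_eq_sub_of_hasDeriv_right
    (fun x hx => (hW x hx).continuousWithinAt)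
    (fun x hx => ((hW x (mem_Icc_of_Ioo hx)).hasDerivAt (Icc_mem_nhds hx.1 hx.2)).hasDerivWithinAt)
    ?_
  have hgc : ContinuousOn g (uIcc a b) := fun x hx => (hg x hx).continuousWithinAt
  have hfc : ContinuousOn f (uIcc a b) := fun x hx => (hf x hx).continuousWithinAt
  exact ((hf''.mul hgc).sub (hfc.mul hg'')).intervalIntegrable

end Calculus

section PartialDeriv

variable {E : Type*} [NormedAddCommGroup E] [NormedSpace ℝ E] {s t u : Set ℝ} {K : ℝ → ℝ → E}
  {x y : ℝ}

noncomputable def partialFst (s : Set ℝ) (K : ℝ → ℝ → E) (x y : ℝ) : E :=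
  derivWithin (K · y) s x

noncomputable def partialSnd (t : Set ℝ) (K : ℝ → ℝ → E) (x y : ℝ) : E :=
  derivWithin (K x) t y

theorem DifferentiableOn.hasDerivWithinAt_partialFst
    (hK : DifferentiableOn ℝ (uncurry K) (s ×ˢ t)) (hx : x ∈ s) (hy : y ∈ t) :
    HasDerivWithinAt (K · y) (partialFst s K x y) s x := by
  have hmaps : MapsTo (·, y) s (s ×ˢ t) := fun _ hz => ⟨hz, hy⟩
  exact ((hK (x, y) ⟨hx, hy⟩).comp x (differentiableWithinAt_id.prodMk
    (differentiableWithinAt_const y)) hmaps).hasDerivWithinAt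

theorem DifferentiableOn.hasDerivWithinAt_partialSnd
    (hK : DifferentiableOn ℝ (uncurry K) (s ×ˢ t)) (hx : x ∈ s) (hy : y ∈ t) :
    HasDerivWithinAt (K x) (partialSnd t K x y) t y := by
  have hmaps : MapsTo (x, ·) t (s ×ˢ t) := fun _ hz => ⟨hx, hz⟩
  exact ((hK (x, y) ⟨hx, hy⟩).comp y ((differentiableWithinAt_const x).prodMk
    differentiableWithinAt_id) hmaps).hasDerivWithinAt

theorem partialFst_eq_fderivWithin (hK : DifferentiableWithinAt ℝ (uncurry K) (s ×ˢ t) (x, y))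
    (hs : UniqueDiffWithinAt ℝ s x) (hy : y ∈ t) :
    partialFst s K x y = fderivWithin ℝ (uncurry K) (s ×ˢ t) (x, y) (1, 0) := by
  have hmaps : MapsTo (·, y) s (s ×ˢ t) := fun _ hz => ⟨hz, hy⟩
  exact (hK.hasFDerivWithinAt.comp_hasDerivWithinAt x ((hasDerivWithinAt_id x s).prodMk
    (hasDerivWithinAt_const x s y)) hmaps).derivWithin hs

theorem partialSnd_eq_fderivWithin (hK : DifferentiableWithinAt ℝ (uncurry K) (s ×ˢ t) (x, y))
    (hx : x ∈ s) (ht : UniqueDiffWithinAt ℝ t y) :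
    partialSnd t K x y = fderivWithin ℝ (uncurry K) (s ×ˢ t) (x, y) (0, 1) := by
  have hmaps : MapsTo (x, ·) t (s ×ˢ t) := fun _ hz => ⟨hx, hz⟩
  exact (hK.hasFDerivWithinAt.comp_hasDerivWithinAt y ((hasDerivWithinAt_const y t x).prodMk
    (hasDerivWithinAt_id y t)) hmaps).derivWithin ht

theorem ContDiffOn.partialFst {m n : WithTop ℕ∞} (hK : ContDiffOn ℝ n (uncurry K) (s ×ˢ t))
    (hmn : m + 1 ≤ n) (hs : UniqueDiffOn ℝ s) (ht : UniqueDiffOn ℝ t) :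
    ContDiffOn ℝ m (uncurry (partialFst s K)) (s ×ˢ t) := by
  refine ((hK.fderivWithin (hs.prod ht) hmn).clm_apply
    (contDiffOn_const (c := ((1 : ℝ), (0 : ℝ))))).congr ?_
  rintro ⟨x, y⟩ ⟨hx, hy⟩
  exact partialFst_eq_fderivWithin
    ((hK.of_le (le_add_self.trans hmn)).differentiableOn one_ne_zero _ ⟨hx, hy⟩) (hs x hx) hy

theorem ContDiffOn.partialSnd {m n : WithTop ℕ∞} (hK : ContDiffOn ℝ n (uncurry K) (s ×ˢ t))
    (hmn : m + 1 ≤ n) (hs : UniqueDiffOn ℝ s) (ht : UniqueDiffOn ℝ t) :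
    ContDiffOn ℝ m (uncurry (partialSnd t K)) (s ×ˢ t) := by
  refine ((hK.fderivWithin (hs.prod ht) hmn).clm_apply
    (contDiffOn_const (c := ((0 : ℝ), (1 : ℝ))))).congr ?_
  rintro ⟨x, y⟩ ⟨hx, hy⟩
  exact partialSnd_eq_fderivWithin
    ((hK.of_le (le_add_self.trans hmn)).differentiableOn one_ne_zero _ ⟨hx, hy⟩) hx (ht y hy)

theorem hasDerivWithinAt_comp_curve {α γ : ℝ → ℝ} {α' γ' z : ℝ}
    (hK : DifferentiableWithinAt ℝ (uncurry K) (s ×ˢ t) (α z, γ z))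
    (hs : UniqueDiffWithinAt ℝ s (α z)) (ht : UniqueDiffWithinAt ℝ t (γ z))
    (hα : HasDerivWithinAt α α' u z) (hγ : HasDerivWithinAt γ γ' u z)
    (hmaps : MapsTo (fun w => (α w, γ w)) u (s ×ˢ t)) (hz : z ∈ u) :
    HasDerivWithinAt (fun w => K (α w) (γ w))
      (α' • partialFst s K (α z) (γ z) + γ' • partialSnd t K (α z) (γ z)) u z := by
  have hdecomp : ((α', γ') : ℝ × ℝ) = α' • ((1 : ℝ), (0 : ℝ)) + γ' • ((0 : ℝ), (1 : ℝ)) := by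
    simp
  rw [partialFst_eq_fderivWithin hK hs (hmaps hz).2,
    partialSnd_eq_fderivWithin hK (hmaps hz).1 ht, ← map_smul, ← map_smul, ← map_add, ← hdecomp]
  exact hK.hasFDerivWithinAt.comp_hasDerivWithinAt z (hα.prodMk hγ) hmaps

end PartialDeriv

section Leibniz

variable {E : Type*} [NormedAddCommGroup E] [NormedSpace ℝ E] {F F' : ℝ → ℝ → E} {x₀ : ℝ}

theorem eventually_norm_sub_sub_smul_le {s T : Set ℝ} (hs : Convex ℝ s) (hsc : IsCompact s)
    (hT : IsCompact T) (hF' : ContinuousOn (uncurry F') (s ×ˢ T))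
    (hd : ∀ x ∈ s, ∀ t ∈ T, HasDerivWithinAt (F · t) (F' x t) s x) (hx₀ : x₀ ∈ s)
    {ε : ℝ} (hε : 0 < ε) :
    ∀ᶠ x in 𝓝[s] x₀, ∀ t ∈ T, ‖F x t - F x₀ t - (x - x₀) • F' x₀ t‖ ≤ ε * |x - x₀| := by
  obtain ⟨δ, hδ, hF'δ⟩ := Metric.uniformContinuousOn_iff.1
    ((hsc.prod hT).uniformContinuousOn_of_continuous hF') ε hε
  filter_upwards [inter_mem_nhdsWithin s (Metric.ball_mem_nhds x₀ hδ)] with x hx t ht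
  have hderiv : ∀ y ∈ s ∩ Metric.ball x₀ δ, HasDerivWithinAt (fun z => F z t - z • F' x₀ t)
      (F' y t - F' x₀ t) (s ∩ Metric.ball x₀ δ) y := fun y hy =>
    (((hd y hy.1 t ht).sub ((hasDerivWithinAt_id y s).smul_const (F' x₀ t))).mono
      inter_subset_left).congr_deriv (by simp)
  have hbound : ∀ y ∈ s ∩ Metric.ball x₀ δ, ‖F' y t - F' x₀ t‖ ≤ ε := fun y hy => by
    rw [← dist_eq_norm]
    refine (hF'δ (y, t) ⟨hy.1, ht⟩ (x₀, t) ⟨hx₀, ht⟩ ?_).le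
    simpa [Prod.dist_eq] using hy.2
  have := (hs.inter (convex_ball x₀ δ)).norm_image_sub_le_of_norm_hasDerivWithin_le hderiv
    hbound ⟨hx₀, Metric.mem_ball_self hδ⟩ hx
  rw [Real.norm_eq_abs] at this
  convert this using 2
  rw [sub_smul]
  abel

variable {b : ℝ}

theorem hasDerivWithinAt_integral_sub_sub_smul
    (hF' : ContinuousOn (uncurry F') (Icc (-b) b ×ˢ Icc (-b) b))
    (hd : ∀ x ∈ Icc (-b) b, ∀ t ∈ Icc (-b) b,
      HasDerivWithinAt (F · t) (F' x t) (Icc (-b) b) x)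
    (hx₀ : x₀ ∈ Icc (-b) b) :
    HasDerivWithinAt (fun x => ∫ t in (-x)..x, (F x t - F x₀ t - (x - x₀) • F' x₀ t)) 0
      (Icc (-b) b) x₀ := by
  rw [hasDerivWithinAt_iff_isLittleO, Asymptotics.isLittleO_iff]
  intro c hc
  have hb : 0 ≤ b := by linarith [hx₀.1, hx₀.2]
  filter_upwards [self_mem_nhdsWithin, eventually_norm_sub_sub_smul_le (convex_Icc _ _)
    isCompact_Icc isCompact_Icc hF' hd hx₀ (div_pos hc (by linarith : (0 : ℝ) < 2 * b + 1))]
    with x hx hbound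
  have hlen : |x - -x| ≤ 2 * b := by
    rw [abs_le]; constructor <;> linarith [hx.1, hx.2]
  simp only [sub_self, zero_smul, sub_zero, intervalIntegral.integral_zero, smul_zero,
    Real.norm_eq_abs]
  calc ‖∫ t in (-x)..x, (F x t - F x₀ t - (x - x₀) • F' x₀ t)‖
      ≤ c / (2 * b + 1) * |x - x₀| * |x - -x| :=
        intervalIntegral.norm_integral_le_of_norm_le_const fun t ht =>
          hbound t (uIcc_neg_self_subset_Icc hx (uIoc_subset_uIcc ht))
    _ ≤ c / (2 * b + 1) * |x - x₀| * (2 * b + 1) := by gcongr; linarith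
    _ = c * |x - x₀| := by field_simp

variable [CompleteSpace E]

theorem hasDerivWithinAt_parametric_integral_neg_self
    (hF : ∀ x ∈ Icc (-b) b, ContinuousOn (F x) (Icc (-b) b))
    (hF' : ContinuousOn (uncurry F') (Icc (-b) b ×ˢ Icc (-b) b))
    (hd : ∀ x ∈ Icc (-b) b, ∀ t ∈ Icc (-b) b,
      HasDerivWithinAt (F · t) (F' x t) (Icc (-b) b) x)
    (hx₀ : x₀ ∈ Icc (-b) b) :
    HasDerivWithinAt (fun x => ∫ t in (-x)..x, F x t)
      (F x₀ x₀ + F x₀ (-x₀) + ∫ t in (-x₀)..x₀, F' x₀ t) (Icc (-b) b) x₀ := by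
  have hF'₀ : ContinuousOn (F' x₀) (Icc (-b) b) := hF'.uncurry_left x₀ hx₀
  have hfrozen := hasDerivWithinAt_integral_neg_self (hF x₀ hx₀) hx₀
  have hlinear : HasDerivWithinAt (fun x => (x - x₀) • ∫ t in (-x)..x, F' x₀ t)
      (∫ t in (-x₀)..x₀, F' x₀ t) (Icc (-b) b) x₀ :=
    (((hasDerivWithinAt_id x₀ _).sub_const x₀).smul
      (hasDerivWithinAt_integral_neg_self hF'₀ hx₀)).congr_deriv (by simp)
  have hsplit : ∀ x ∈ Icc (-b) b, ∫ t in (-x)..x, F x t = (∫ t in (-x)..x, F x₀ t)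
      + (x - x₀) • (∫ t in (-x)..x, F' x₀ t)
      + ∫ t in (-x)..x, (F x t - F x₀ t - (x - x₀) • F' x₀ t) := fun x hx => by
    have hsub := uIcc_neg_self_subset_Icc hx
    have hFx : IntervalIntegrable (F x) volume (-x) x := ((hF x hx).mono hsub).intervalIntegrable
    have hFx₀ : IntervalIntegrable (F x₀) volume (-x) x :=
      ((hF x₀ hx₀).mono hsub).intervalIntegrable
    have hF'x₀ : IntervalIntegrable (fun t => (x - x₀) • F' x₀ t) volume (-x) x :=
      ((hF'₀.mono hsub).const_smul (x - x₀)).intervalIntegrable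
    rw [intervalIntegral.integral_sub (hFx.sub hFx₀) hF'x₀, intervalIntegral.integral_sub hFx hFx₀,
      intervalIntegral.integral_smul]
    abel
  simpa using ((hfrozen.add hlinear).add
    (hasDerivWithinAt_integral_sub_sub_smul hF' hd hx₀)).congr hsplit (hsplit x₀ hx₀)

end Leibniz

section Transmutation

variable {b : ℝ} {K : ℝ → ℝ → ℂ} {v v' : ℝ → ℂ} {x : ℝ}

theorem d2x_eq_partialFst : d2x b K = partialFst (Icc (-b) b) (partialFst (Icc (-b) b) K) := rfl

theorem d2t_eq_partialSnd : d2t b K = partialSnd (Icc (-b) b) (partialSnd (Icc (-b) b) K) := rfl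

theorem hasDerivWithinAt_diag (hb : 0 < b)
    (hK : DifferentiableOn ℝ (uncurry K) (Icc (-b) b ×ˢ Icc (-b) b)) (hx : x ∈ Icc (-b) b) :
    HasDerivWithinAt (fun y => K y y)
      (partialFst (Icc (-b) b) K x x + partialSnd (Icc (-b) b) K x x) (Icc (-b) b) x := by
  have hS : UniqueDiffOn ℝ (Icc (-b) b) := uniqueDiffOn_Icc (by linarith)
  simpa using hasDerivWithinAt_comp_curve (α := id) (γ := id) (hK _ ⟨hx, hx⟩) (hS x hx)
    (hS x hx) (hasDerivWithinAt_id x _) (hasDerivWithinAt_id x _) (fun _ hy => ⟨hy, hy⟩) hx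

theorem hasDerivWithinAt_antidiag (hb : 0 < b)
    (hK : DifferentiableOn ℝ (uncurry K) (Icc (-b) b ×ˢ Icc (-b) b)) (hx : x ∈ Icc (-b) b) :
    HasDerivWithinAt (fun y => K y (-y))
      (partialFst (Icc (-b) b) K x (-x) - partialSnd (Icc (-b) b) K x (-x)) (Icc (-b) b) x := by
  have hS : UniqueDiffOn ℝ (Icc (-b) b) := uniqueDiffOn_Icc (by linarith)
  have hx' := neg_mem_Icc_neg_self hx
  simpa [← sub_eq_add_neg] using hasDerivWithinAt_comp_curve (α := id) (γ := Neg.neg)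
    (hK _ ⟨hx, hx'⟩) (hS x hx) (hS _ hx') (hasDerivWithinAt_id x _) (hasDerivWithinAt_neg x _)
    (fun _ hy => ⟨hy, neg_mem_Icc_neg_self hy⟩) hx

theorem partialFst_add_partialSnd_diag {q : ℝ → ℂ} {h : ℂ} (hb : 0 < b)
    (hq : ContinuousOn q (Icc (-b) b))
    (hK : DifferentiableOn ℝ (uncurry K) (Icc (-b) b ×ˢ Icc (-b) b))
    (hdiag : ∀ x ∈ Icc (-b) b, K x x = h / 2 + (1 / 2) * ∫ s in (0 : ℝ)..x, q s)
    (hx : x ∈ Icc (-b) b) :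
    partialFst (Icc (-b) b) K x x + partialSnd (Icc (-b) b) K x x = q x / 2 := by
  have hgoursat : HasDerivWithinAt (fun y => K y y) (1 / 2 * q x) (Icc (-b) b) x :=
    (((hasDerivWithinAt_integral_Icc hq ⟨by linarith, hb.le⟩ hx).const_mul (1 / 2)).const_add
      (h / 2)).congr hdiag (hdiag x hx)
  rw [(uniqueDiffOn_Icc (by linarith) x hx).eq_deriv _ (hasDerivWithinAt_diag hb hK hx) hgoursat]
  ring

theorem partialFst_eq_partialSnd_antidiag {c : ℂ} (hb : 0 < b)
    (hK : DifferentiableOn ℝ (uncurry K) (Icc (-b) b ×ˢ Icc (-b) b))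
    (hanti : ∀ x ∈ Icc (-b) b, K x (-x) = c) (hx : x ∈ Icc (-b) b) :
    partialFst (Icc (-b) b) K x (-x) = partialSnd (Icc (-b) b) K x (-x) :=
  sub_eq_zero.1 <| (uniqueDiffOn_Icc (by linarith) x hx).eq_deriv _
    (hasDerivWithinAt_antidiag hb hK hx)
    ((hasDerivWithinAt_const x _ c).congr hanti (hanti x hx))

theorem hasDerivWithinAt_integral_kernel_mul (hb : 0 < b)
    (hK : ContDiffOn ℝ 1 (uncurry K) (Icc (-b) b ×ˢ Icc (-b) b))
    (hv : ContinuousOn v (Icc (-b) b)) (hx : x ∈ Icc (-b) b) :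
    HasDerivWithinAt (fun y => ∫ t in (-y)..y, K y t * v t)
      (K x x * v x + K x (-x) * v (-x) + ∫ t in (-x)..x, partialFst (Icc (-b) b) K x t * v t)
      (Icc (-b) b) x := by
  have hS : UniqueDiffOn ℝ (Icc (-b) b) := uniqueDiffOn_Icc (by linarith)
  have hv₂ : ContinuousOn (fun p : ℝ × ℝ => v p.2) (Icc (-b) b ×ˢ Icc (-b) b) :=
    hv.comp continuousOn_snd fun _ hp => hp.2
  exact hasDerivWithinAt_parametric_integral_neg_self (F := fun y t => K y t * v t)
    (F' := fun y t => partialFst (Icc (-b) b) K y t * v t)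
    (fun y hy => (hK.continuousOn.uncurry_left y hy).mul hv)
    ((hK.partialFst (m := 0) (by simp) hS hS).continuousOn.fun_mul hv₂)
    (fun y hy t ht =>
      ((hK.differentiableOn one_ne_zero).hasDerivWithinAt_partialFst hy ht).mul_const (v t)) hx

theorem integral_partialFst_partialFst_mul {q : ℝ → ℂ} {ω : ℂ} (hb : 0 < b)
    (hK : ContDiffOn ℝ 2 (uncurry K) (Icc (-b) b ×ˢ Icc (-b) b))
    (hpde : ∀ x ∈ Icc (-b) b, ∀ t ∈ Icc (-b) b, d2x b K x t - q x * K x t = d2t b K x t)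
    (hv : ∀ x ∈ Icc (-b) b, HasDerivWithinAt v (v' x) (Icc (-b) b) x)
    (hv' : ∀ x ∈ Icc (-b) b, HasDerivWithinAt v' (-(ω ^ 2 * v x)) (Icc (-b) b) x)
    (hx : x ∈ Icc (-b) b) :
    ∫ t in (-x)..x, partialFst (Icc (-b) b) (partialFst (Icc (-b) b) K) x t * v t
      = (q x - ω ^ 2) * (∫ t in (-x)..x, K x t * v t)
        + (partialSnd (Icc (-b) b) K x x * v x - K x x * v' x)
        - (partialSnd (Icc (-b) b) K x (-x) * v (-x) - K x (-x) * v' (-x)) := by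
  set S := Icc (-b) b
  have hS : UniqueDiffOn ℝ S := uniqueDiffOn_Icc (by linarith)
  have hsub := uIcc_neg_self_subset_Icc hx
  have hK₂ : ContDiffOn ℝ 1 (uncurry (partialSnd S K)) (S ×ˢ S) :=
    hK.partialSnd (by norm_num) hS hS
  have hK₂₂ : ContinuousOn (partialSnd S (partialSnd S K) x) S :=
    ((hK₂.partialSnd (m := 0) (by simp) hS hS).continuousOn).uncurry_left x hx
  have hvc : ContinuousOn v S := fun t ht => (hv t ht).continuousWithinAt
  have hKc : ContinuousOn (K x) S := hK.continuousOn.uncurry_left x hx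
  have hlagrange := integral_secondDeriv_mul_sub_mul_secondDeriv (f := K x) (g := v)
    (fun t ht => ((hK.differentiableOn two_ne_zero).hasDerivWithinAt_partialSnd hx
      (hsub ht)).mono hsub)
    (fun t ht => ((hK₂.differentiableOn one_ne_zero).hasDerivWithinAt_partialSnd hx
      (hsub ht)).mono hsub)
    (fun t ht => (hv t (hsub ht)).mono hsub) (fun t ht => (hv' t (hsub ht)).mono hsub)
    (hK₂₂.mono hsub) ((hvc.mono hsub).const_smul (ω ^ 2)).neg
  have hintegrand : ∀ t ∈ uIcc (-x) x, partialFst S (partialFst S K) x t * v t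
      = (partialSnd S (partialSnd S K) x t * v t - K x t * -(ω ^ 2 * v t))
        + (q x - ω ^ 2) * (K x t * v t) := fun t ht => by
    have hpde_t := hpde x hx t (hsub ht)
    rw [d2x_eq_partialFst, d2t_eq_partialSnd] at hpde_t
    linear_combination v t * hpde_t
  rw [intervalIntegral.integral_congr hintegrand, intervalIntegral.integral_add ?_ ?_,
    intervalIntegral.integral_const_mul, hlagrange]
  · ring
  · exact ((hK₂₂.mono hsub).mul (hvc.mono hsub)).sub
      ((hKc.mono hsub).mul ((hvc.mono hsub).const_smul (ω ^ 2)).neg) |>.intervalIntegrable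
  · exact (continuousOn_const.mul ((hKc.mono hsub).mul (hvc.mono hsub))).intervalIntegrable

noncomputable def transmutation (K : ℝ → ℝ → ℂ) (v : ℝ → ℂ) (x : ℝ) : ℂ :=
  v x + ∫ t in (-x)..x, K x t * v t

noncomputable def transmutationDeriv (b : ℝ) (K : ℝ → ℝ → ℂ) (v v' : ℝ → ℂ) (x : ℝ) : ℂ :=
  v' x + K x x * v x + K x (-x) * v (-x) + ∫ t in (-x)..x, partialFst (Icc (-b) b) K x t * v t

theorem hasDerivWithinAt_derivWithin_of_ode {s : Set ℝ} {ω : ℂ} (hs : UniqueDiffOn ℝ s)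
    (hv : ContDiffOn ℝ 2 v s)
    (hveq : ∀ x ∈ s, derivWithin (derivWithin v s) s x + ω ^ 2 * v x = 0) (hx : x ∈ s) :
    HasDerivWithinAt (derivWithin v s) (-(ω ^ 2 * v x)) s x := by
  rw [← eq_neg_of_add_eq_zero_left (hveq x hx)]
  exact ((hv.derivWithin hs (m := 1) le_rfl).differentiableOn one_ne_zero x hx).hasDerivWithinAt

theorem hasDerivWithinAt_transmutation (hb : 0 < b)
    (hK : ContDiffOn ℝ 1 (uncurry K) (Icc (-b) b ×ˢ Icc (-b) b))
    (hv : ∀ x ∈ Icc (-b) b, HasDerivWithinAt v (v' x) (Icc (-b) b) x) (hx : x ∈ Icc (-b) b) :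
    HasDerivWithinAt (transmutation K v) (transmutationDeriv b K v v' x) (Icc (-b) b) x :=
  ((hv x hx).add (hasDerivWithinAt_integral_kernel_mul hb hK
    (fun y hy => (hv y hy).continuousWithinAt) hx)).congr_deriv
    (by rw [transmutationDeriv]; ring)

theorem hasDerivWithinAt_transmutationDeriv {q : ℝ → ℂ} {h ω : ℂ} (hb : 0 < b)
    (hq : ContinuousOn q (Icc (-b) b)) (hK : IsTransmutationKernel b q h K)
    (hv : ∀ x ∈ Icc (-b) b, HasDerivWithinAt v (v' x) (Icc (-b) b) x)
    (hv' : ∀ x ∈ Icc (-b) b, HasDerivWithinAt v' (-(ω ^ 2 * v x)) (Icc (-b) b) x)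
    (hx : x ∈ Icc (-b) b) :
    HasDerivWithinAt (transmutationDeriv b K v v') ((q x - ω ^ 2) * transmutation K v x)
      (Icc (-b) b) x := by
  obtain ⟨hreg, hpde, hdiag, hanti⟩ := hK
  have hS : UniqueDiffOn ℝ (Icc (-b) b) := uniqueDiffOn_Icc (by linarith)
  have hdiff : DifferentiableOn ℝ (uncurry K) (Icc (-b) b ×ˢ Icc (-b) b) :=
    hreg.differentiableOn two_ne_zero
  have hvneg : HasDerivWithinAt (fun y => v (-y)) (-v' (-x)) (Icc (-b) b) x := by
    simpa [Function.comp_def] using (hv _ (neg_mem_Icc_neg_self hx)).scomp x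
      (hasDerivWithinAt_neg x _) fun _ hy => neg_mem_Icc_neg_self hy
  have hintegral := hasDerivWithinAt_integral_kernel_mul hb
    (hreg.partialFst (by norm_num) hS hS) (fun y hy => (hv y hy).continuousWithinAt) hx
  refine ((((hv' x hx).add ((hasDerivWithinAt_diag hb hdiff hx).mul (hv x hx))).add
    ((hasDerivWithinAt_antidiag hb hdiff hx).mul hvneg)).add hintegral).congr_deriv ?_
  rw [transmutation]
  linear_combination (2 * v x) * partialFst_add_partialSnd_diag hb hq hdiff hdiag hx
    + (2 * v (-x)) * partialFst_eq_partialSnd_antidiag hb hdiff hanti hx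
    + integral_partialFst_partialFst_mul hb hreg hpde hv hv' hx

end Transmutation

/-- if `v'' + ω²v = 0` on `[-b,b]`, then `u := T v` is twice continuously
differentiable, satisfies `u'' − q u + ω² u = 0`, with `u(0) = v(0)` and
`u'(0) = v'(0) + h v(0)`. -/
theorem transmutation_maps_solutions
    (b : ℝ) (hb : 0 < b) (q : ℝ → ℂ) (hq : ContDiffOn ℝ 1 q (Set.Icc (-b) b))
    (h : ℂ) (K : ℝ → ℝ → ℂ) (hK : IsTransmutationKernel b q h K)
    (ω : ℂ) (v : ℝ → ℂ) (hv : ContDiffOn ℝ 2 v (Set.Icc (-b) b))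
    (hveq : ∀ x ∈ Set.Icc (-b) b,
      derivWithin (derivWithin v (Set.Icc (-b) b)) (Set.Icc (-b) b) x + ω ^ 2 * v x = 0) :
    ContDiffOn ℝ 2 (fun x => v x + ∫ t in (-x)..x, K x t * v t) (Set.Icc (-b) b) ∧
    (∀ x ∈ Set.Icc (-b) b,
      derivWithin
          (derivWithin (fun y => v y + ∫ t in (-y)..y, K y t * v t) (Set.Icc (-b) b))
          (Set.Icc (-b) b) x
        - q x * (v x + ∫ t in (-x)..x, K x t * v t)
        + ω ^ 2 * (v x + ∫ t in (-x)..x, K x t * v t) = 0) ∧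
    (v 0 + ∫ t in (-(0:ℝ))..(0:ℝ), K 0 t * v t) = v 0 ∧
    derivWithin (fun y => v y + ∫ t in (-y)..y, K y t * v t) (Set.Icc (-b) b) 0
      = derivWithin v (Set.Icc (-b) b) 0 + h * v 0 := by
  set S := Icc (-b) b
  set v' := derivWithin v S
  have hS : UniqueDiffOn ℝ S := uniqueDiffOn_Icc (by linarith)
  have h0 : (0 : ℝ) ∈ S := ⟨by linarith, hb.le⟩
  have hv' : ∀ x ∈ S, HasDerivWithinAt v (v' x) S x :=
    fun x hx => (hv.differentiableOn two_ne_zero x hx).hasDerivWithinAt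
  have hT : ∀ x ∈ S, HasDerivWithinAt (transmutation K v) (transmutationDeriv b K v v' x) S x :=
    fun x hx => hasDerivWithinAt_transmutation hb (hK.1.of_le one_le_two) hv' hx
  have hT' : ∀ x ∈ S, HasDerivWithinAt (transmutationDeriv b K v v')
      ((q x - ω ^ 2) * transmutation K v x) S x :=
    fun x hx => hasDerivWithinAt_transmutationDeriv hb hq.continuousOn hK hv'
      (fun y hy => hasDerivWithinAt_derivWithin_of_ode hS hv hveq hy) hx
  have hderiv : ∀ x ∈ S, derivWithin (transmutation K v) S x = transmutationDeriv b K v v' x :=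
    fun x hx => (hT x hx).derivWithin (hS x hx)
  refine ⟨contDiffOn_two_of_hasDerivWithinAt hS hT hT' ?_, fun x hx => ?_, by simp, ?_⟩
  · exact (hq.continuousOn.sub continuousOn_const).mul fun x hx => (hT x hx).continuousWithinAt
  · show derivWithin (derivWithin (transmutation K v) S) S x - q x * transmutation K v x
      + ω ^ 2 * transmutation K v x = 0
    rw [derivWithin_congr hderiv (hderiv x hx), (hT' x hx).derivWithin (hS x hx)]
    ring
  · show derivWithin (transmutation K v) S 0 = _
    have hK₀ : K 0 0 = h / 2 := by simpa using hK.2.2.2 0 h0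
    rw [hderiv 0 h0, transmutationDeriv]
    simp only [neg_zero, intervalIntegral.integral_same, hK₀]
    ring
end

section
/- For every λ ∈ ℂ the series y₁ := Σ_{k=0}^∞ (λᵏ/(2k)!)·φ_{2k} and y₂ := Σ_{k=0}^∞ (λᵏ/(2k+1)!)·φ_{2k+1} converge uniformly on [a,b]; the sum functions y₁ and y₂ belong to C²(a,b) ∩ C¹[a,b], satisfy y'' − q·y = λ·y on (a,b), and obey the initial conditions y₁(x₀) = f(x₀), y₁'(x₀) = f'(x₀), y₂(x₀) = 0, y₂'(x₀) = 1/f(x₀). -/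
/-!
Write `φ_j = f · A_j`, where `A_j` is `X⁽ʲ⁾` or `X̃⁽ʲ⁾` according to the parity of `j`, and let
`B_j` be the other one. The defining recursions give `A_j' = j B_{j-1} / f²` and
`B_j' = j A_{j-1} f²`, hence `φ_j'' = q φ_j + j (j-1) φ_{j-2}` whenever `f'' = q f`. Applying
`d²/dx² - q` to the `k`-th term `λᵏ φ_{2k+p} / (2k+p)!` of `y₁` (`p = 0`) or `y₂` (`p = 1`)
therefore gives `λ` times the `(k-1)`-st term, and the `k = 0` term is annihilated.
Convergence comes from `|X⁽ʲ⁾(x)| ≤ (C |x - x₀|)ʲ`: the series of the terms and of their first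
two derivatives are dominated by `c (|λ| R²)ᵏ / k!`, so they may be differentiated termwise;
at the endpoints of `[a, b]` the one-sided derivative is recovered from the continuity of the
termwise derivative. At `x₀` every term with `k ≥ 1` vanishes together with its derivative.
-/

open Set MeasureTheory Filter

/-- The recursive integrals `X⁽⁰⁾ ≡ 1`, `X⁽ⁿ⁾(x) = n ∫_{x₀}^x X⁽ⁿ⁻¹⁾(s) (f(s)²)^((−1)ⁿ) ds`. -/
noncomputable def Xrec (x₀ : ℝ) (f : ℝ → ℂ) : ℕ → ℝ → ℂ
  | 0 => fun _ => 1
  | n + 1 => fun x => ((n : ℂ) + 1) * ∫ s in x₀..x, Xrec x₀ f n s * (f s ^ 2) ^ ((-1 : ℤ) ^ (n + 1))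

/-- The recursive integrals `X̃⁽⁰⁾ ≡ 1`, `X̃⁽ⁿ⁾(x) = n ∫_{x₀}^x X̃⁽ⁿ⁻¹⁾(s) (f(s)²)^((−1)^(n−1)) ds`. -/
noncomputable def Xtrec (x₀ : ℝ) (f : ℝ → ℂ) : ℕ → ℝ → ℂ
  | 0 => fun _ => 1
  | n + 1 => fun x => ((n : ℂ) + 1) * ∫ s in x₀..x, Xtrec x₀ f n s * (f s ^ 2) ^ ((-1 : ℤ) ^ n)

/-- `φ_k = f·X⁽ᵏ⁾` for odd `k`, `φ_k = f·X̃⁽ᵏ⁾` for even `k`. -/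
noncomputable def phiF (x₀ : ℝ) (f : ℝ → ℂ) (k : ℕ) (x : ℝ) : ℂ :=
  if Odd k then f x * Xrec x₀ f k x else f x * Xtrec x₀ f k x

/-- `ψ_k = X̃⁽ᵏ⁾/f` for odd `k`, `ψ_k = X⁽ᵏ⁾/f` for even `k`. -/
noncomputable def psiF (x₀ : ℝ) (f : ℝ → ℂ) (k : ℕ) (x : ℝ) : ℂ :=
  if Odd k then Xtrec x₀ f k x / f x else Xrec x₀ f k x / f x

/-- The SPPS solution `y₁ = Σ_{k=0}^∞ (λᵏ/(2k)!) φ_{2k}`. -/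
noncomputable def sppsY1 (x₀ : ℝ) (f : ℝ → ℂ) (lam : ℂ) (x : ℝ) : ℂ :=
  ∑' k : ℕ, lam ^ k / (Nat.factorial (2 * k) : ℂ) * phiF x₀ f (2 * k) x

/-- The SPPS solution `y₂ = Σ_{k=0}^∞ (λᵏ/(2k+1)!) φ_{2k+1}`. -/
noncomputable def sppsY2 (x₀ : ℝ) (f : ℝ → ℂ) (lam : ℂ) (x : ℝ) : ℂ :=
  ∑' k : ℕ, lam ^ k / (Nat.factorial (2 * k + 1) : ℂ) * phiF x₀ f (2 * k + 1) x

open intervalIntegral Topology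
open scoped Interval

section Primitive
variable {E : Type*} [NormedAddCommGroup E] [NormedSpace ℝ E] {a b x₀ : ℝ}

theorem hasDerivWithinAt_integral_Icc_s4 [CompleteSpace E] {h : ℝ → E}
    (hh : ContinuousOn h (Icc a b)) (hx₀ : x₀ ∈ Icc a b) {x : ℝ} (hx : x ∈ Icc a b) :
    HasDerivWithinAt (fun u => ∫ s in x₀..u, h s) (h x) (Icc a b) x := by
  have hab : a ≤ b := hx.1.trans hx.2
  rw [← uIcc_of_le hab] at hh hx₀ hx ⊢
  have : Fact (x ∈ [[a, b]]) := ⟨hx⟩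
  exact integral_hasDerivWithinAt_right (hh.mono (uIcc_subset_uIcc hx₀ hx)).intervalIntegrable
    (hh.stronglyMeasurableAtFilter_nhdsWithin measurableSet_uIcc x) (hh x hx)

theorem norm_integral_le_of_norm_le_mul_pow {h : ℝ → E} {x B : ℝ} {n : ℕ}
    (hh : IntervalIntegrable h volume x₀ x) (hbd : ∀ s ∈ Ι x₀ x, ‖h s‖ ≤ B * |s - x₀| ^ n) :
    ‖∫ s in x₀..x, h s‖ ≤ B * |x - x₀| ^ (n + 1) / (n + 1) := by
  have hpow : IntegrableOn (fun s => B * |s - x₀| ^ n) (Ι x₀ x) := by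
    rw [← intervalIntegrable_iff]
    exact (continuous_const.mul ((continuous_id.sub continuous_const).abs.pow n)).intervalIntegrable
      _ _
  calc ‖∫ s in x₀..x, h s‖ ≤ ∫ s in Ι x₀ x, ‖h s‖ := norm_integral_le_integral_norm_uIoc
    _ ≤ ∫ s in Ι x₀ x, B * |s - x₀| ^ n :=
        setIntegral_mono_on (intervalIntegrable_iff.1 hh.norm) hpow measurableSet_uIoc hbd
    _ = B * |x - x₀| ^ (n + 1) / (n + 1) := by
        rw [MeasureTheory.integral_const_mul, integral_pow_abs_sub_uIoc, mul_div_assoc]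

end Primitive

section Calculus
variable {E : Type*} [NormedAddCommGroup E] [NormedSpace ℝ E] {a b : ℝ}

theorem hasDerivWithinAt_Icc_of_hasDerivAt_Ioo {Y S : ℝ → E} (hab : a < b)
    (hY : ContinuousOn Y (Icc a b)) (hS : ContinuousOn S (Icc a b))
    (hd : ∀ x ∈ Ioo a b, HasDerivAt Y (S x) x) {x : ℝ} (hx : x ∈ Icc a b) :
    HasDerivWithinAt Y (S x) (Icc a b) x := by
  rw [hasDerivWithinAt_iff_hasFDerivWithinAt, ← closure_Ioo hab.ne]
  refine hasFDerivWithinAt_closure_of_tendsto_fderiv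
    (fun y hy => (hd y hy).differentiableAt.differentiableWithinAt) (convex_Ioo a b) isOpen_Ioo
    (fun y hy => (hY y (closure_Ioo hab.ne ▸ hy)).mono Ioo_subset_Icc_self) ?_
  have hSx : Tendsto S (𝓝[Ioo a b] x) (𝓝 (S x)) := (hS x hx).mono Ioo_subset_Icc_self
  refine ((ContinuousLinearMap.toSpanSingletonCLE (𝕜 := ℝ)).continuous.tendsto _ |>.comp hSx).congr'
    ?_
  filter_upwards [self_mem_nhdsWithin] with y hy
  exact (hd y hy).hasFDerivAt.fderiv.symm

theorem contDiffOn_succ_of_hasDerivWithinAt {s : Set ℝ} {Y S : ℝ → E} {n : ℕ}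
    (hs : UniqueDiffOn ℝ s) (hY : ∀ x ∈ s, HasDerivWithinAt Y (S x) s x)
    (hS : ContDiffOn ℝ n S s) : ContDiffOn ℝ (n + 1) Y s := by
  rw [contDiffOn_succ_iff_derivWithin hs]
  refine ⟨fun x hx => (hY x hx).differentiableWithinAt, by simp, ?_⟩
  exact hS.congr fun x hx => (hY x hx).derivWithin (hs x hx)

theorem ContDiffOn.hasDerivAt_derivWithin_Icc {f : ℝ → E} (hf : ContDiffOn ℝ 2 f (Ioo a b))
    {x : ℝ} (hx : x ∈ Ioo a b) :
    HasDerivAt (derivWithin f (Icc a b)) (derivWithin (derivWithin f (Icc a b)) (Icc a b) x) x := by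
  have hderiv : derivWithin f (Icc a b) =ᶠ[𝓝 x] deriv f := by
    filter_upwards [isOpen_Ioo.mem_nhds hx] with y hy
    exact derivWithin_of_mem_nhds (Icc_mem_nhds hy.1 hy.2)
  have hdiff : DifferentiableAt ℝ (derivWithin f (Icc a b)) x :=
    (((hf.deriv_of_isOpen isOpen_Ioo (by norm_num : (1 : WithTop ℕ∞) + 1 ≤ 2)).differentiableOn
      one_ne_zero x hx).differentiableAt (isOpen_Ioo.mem_nhds hx)).congr_of_eventuallyEq hderiv
  rw [derivWithin_of_mem_nhds (Icc_mem_nhds hx.1 hx.2)]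
  exact hdiff.hasDerivAt

end Calculus

section Series
variable {E : Type*} [NormedAddCommGroup E] [NormedSpace ℝ E] [CompleteSpace E] {a b : ℝ}
  {F F' F'' : ℕ → ℝ → E} {u : ℕ → ℝ}

theorem contDiffOn_tsum_Icc_Ioo (hab : a < b) (hu : Summable u)
    (hFu : ∀ k, ∀ x ∈ Icc a b, ‖F k x‖ ≤ u k) (hF'u : ∀ k, ∀ x ∈ Icc a b, ‖F' k x‖ ≤ u k)
    (hF''u : ∀ k, ∀ x ∈ Ioo a b, ‖F'' k x‖ ≤ u k)
    (hF : ∀ k, ∀ x ∈ Icc a b, HasDerivWithinAt (F k) (F' k x) (Icc a b) x)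
    (hF'c : ∀ k, ContinuousOn (F' k) (Icc a b))
    (hF' : ∀ k, ∀ x ∈ Ioo a b, HasDerivAt (F' k) (F'' k x) x)
    (hF''c : ∀ k, ContinuousOn (F'' k) (Ioo a b)) :
    (∀ x ∈ Icc a b, HasDerivWithinAt (fun y => ∑' k, F k y) (∑' k, F' k x) (Icc a b) x) ∧
    ContDiffOn ℝ 1 (fun y => ∑' k, F k y) (Icc a b) ∧
    ContDiffOn ℝ 2 (fun y => ∑' k, F k y) (Ioo a b) ∧
    ∀ x ∈ Ioo a b, derivWithin (derivWithin (fun y => ∑' k, F k y) (Icc a b)) (Icc a b) x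
      = ∑' k, F'' k x := by
  have hIoo : ∀ x ∈ Ioo a b, Icc a b ∈ 𝓝 x := fun x hx => Icc_mem_nhds hx.1 hx.2
  obtain ⟨c, hc⟩ : (Ioo a b).Nonempty := nonempty_Ioo.2 hab
  have hY' : ∀ x ∈ Ioo a b, HasDerivAt (fun y => ∑' k, F k y) (∑' k, F' k x) x :=
    fun x => hasDerivAt_tsum_of_isPreconnected hu isOpen_Ioo isPreconnected_Ioo
      (fun k y hy => (hF k y (Ioo_subset_Icc_self hy)).hasDerivAt (hIoo y hy))
      (fun k y hy => hF'u k y (Ioo_subset_Icc_self hy)) hc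
      (.of_norm_bounded hu fun k => hFu k c (Ioo_subset_Icc_self hc))
  have hS' : ∀ x ∈ Ioo a b, HasDerivAt (fun y => ∑' k, F' k y) (∑' k, F'' k x) x :=
    fun x => hasDerivAt_tsum_of_isPreconnected hu isOpen_Ioo isPreconnected_Ioo hF' hF''u hc
      (.of_norm_bounded hu fun k => hF'u k c (Ioo_subset_Icc_self hc))
  have hS : ContinuousOn (fun y => ∑' k, F' k y) (Icc a b) := continuousOn_tsum hF'c hu hF'u
  have hY : ∀ x ∈ Icc a b,
      HasDerivWithinAt (fun y => ∑' k, F k y) (∑' k, F' k x) (Icc a b) x :=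
    fun x => hasDerivWithinAt_Icc_of_hasDerivAt_Ioo hab
      (continuousOn_tsum (fun k y hy => (hF k y hy).continuousWithinAt) hu hFu) hS hY'
  refine ⟨hY, ?_, ?_, fun x hx => ?_⟩
  · exact contDiffOn_succ_of_hasDerivWithinAt (n := 0) (uniqueDiffOn_Icc hab) hY
      (contDiffOn_zero.2 hS)
  · have hS1 : ContDiffOn ℝ 1 (fun y => ∑' k, F' k y) (Ioo a b) :=
      contDiffOn_succ_of_hasDerivWithinAt (n := 0) isOpen_Ioo.uniqueDiffOn
        (fun x hx => (hS' x hx).hasDerivWithinAt)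
        (contDiffOn_zero.2 (continuousOn_tsum hF''c hu hF''u))
    exact contDiffOn_succ_of_hasDerivWithinAt (n := 1) isOpen_Ioo.uniqueDiffOn
      (fun x hx => (hY' x hx).hasDerivWithinAt) hS1
  · have hxI := Ioo_subset_Icc_self hx
    rw [derivWithin_congr (fun y hy => (hY y hy).derivWithin (uniqueDiffOn_Icc hab y hy))
      ((hY x hxI).derivWithin (uniqueDiffOn_Icc hab x hxI))]
    exact (hS' x hx).hasDerivWithinAt.derivWithin (uniqueDiffOn_Icc hab x hxI)

end Series

section IterIntegral
variable {a b x₀ C : ℝ} {G W : ℕ → ℝ → ℂ}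

theorem hasDerivWithinAt_iterIntegral_succ (hx₀ : x₀ ∈ Icc a b)
    (hG : ∀ n x, G (n + 1) x = ((n : ℂ) + 1) * ∫ s in x₀..x, G n s * W n s) {n : ℕ}
    (hGW : ContinuousOn (fun s => G n s * W n s) (Icc a b)) {x : ℝ} (hx : x ∈ Icc a b) :
    HasDerivWithinAt (G (n + 1)) (((n : ℂ) + 1) * (G n x * W n x)) (Icc a b) x := by
  rw [show G (n + 1) = _ from funext (hG n)]
  exact (hasDerivWithinAt_integral_Icc_s4 hGW hx₀ hx).const_mul _

theorem continuousOn_iterIntegral (hx₀ : x₀ ∈ Icc a b) (hW : ∀ n, ContinuousOn (W n) (Icc a b))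
    (hG0 : ∀ x, G 0 x = 1)
    (hG : ∀ n x, G (n + 1) x = ((n : ℂ) + 1) * ∫ s in x₀..x, G n s * W n s) :
    ∀ n, ContinuousOn (G n) (Icc a b)
  | 0 => continuousOn_const.congr fun x _ => hG0 x
  | n + 1 => fun _ hx => (hasDerivWithinAt_iterIntegral_succ hx₀ hG
      ((continuousOn_iterIntegral hx₀ hW hG0 hG n).mul (hW n)) hx).continuousWithinAt

theorem norm_iterIntegral_le (hx₀ : x₀ ∈ Icc a b) (hW : ∀ n, ContinuousOn (W n) (Icc a b))
    (hWC : ∀ n, ∀ s ∈ Icc a b, ‖W n s‖ ≤ C) (hG0 : ∀ x, G 0 x = 1)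
    (hG : ∀ n x, G (n + 1) x = ((n : ℂ) + 1) * ∫ s in x₀..x, G n s * W n s) :
    ∀ n, ∀ x ∈ Icc a b, ‖G n x‖ ≤ (C * |x - x₀|) ^ n
  | 0, x, _ => by simp [hG0]
  | n + 1, x, hx => by
    have hC : 0 ≤ C := (norm_nonneg _).trans (hWC 0 x₀ hx₀)
    have hsub : Ι x₀ x ⊆ Icc a b := uIoc_subset_uIcc.trans (uIcc_subset_Icc hx₀ hx)
    have hint : ‖∫ s in x₀..x, G n s * W n s‖ ≤ C ^ (n + 1) * |x - x₀| ^ (n + 1) / (n + 1) := by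
      refine norm_integral_le_of_norm_le_mul_pow
        (((continuousOn_iterIntegral hx₀ hW hG0 hG n).mul (hW n)).mono (uIcc_subset_Icc hx₀ hx)
          |>.intervalIntegrable) fun s hs => ?_
      calc ‖G n s * W n s‖ ≤ (C * |s - x₀|) ^ n * C := by
            rw [norm_mul]
            exact mul_le_mul (norm_iterIntegral_le hx₀ hW hWC hG0 hG n s (hsub hs))
              (hWC n s (hsub hs)) (norm_nonneg _) (by positivity)
        _ = C ^ (n + 1) * |s - x₀| ^ n := by ring
    rw [hG, norm_mul, show ‖(n : ℂ) + 1‖ = n + 1 by exact_mod_cast Complex.norm_natCast (n + 1)]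
    calc (n + 1) * ‖∫ s in x₀..x, G n s * W n s‖
        ≤ (n + 1) * (C ^ (n + 1) * |x - x₀| ^ (n + 1) / (n + 1)) := by gcongr
      _ = (C * |x - x₀|) ^ (n + 1) := by field_simp; ring

theorem iterIntegral_succ_self
    (hG : ∀ n x, G (n + 1) x = ((n : ℂ) + 1) * ∫ s in x₀..x, G n s * W n s) (n : ℕ) :
    G (n + 1) x₀ = 0 := by
  rw [hG, integral_same, mul_zero]

end IterIntegral

section Factors
variable {a b x₀ K : ℝ} {f : ℝ → ℂ}

/-- The factors in `φ_j = f · phiX j` and `ψ_j = psiX j / f`. -/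
noncomputable def phiX (x₀ : ℝ) (f : ℝ → ℂ) (j : ℕ) : ℝ → ℂ :=
  if Odd j then Xrec x₀ f j else Xtrec x₀ f j

noncomputable def psiX (x₀ : ℝ) (f : ℝ → ℂ) (j : ℕ) : ℝ → ℂ :=
  if Odd j then Xtrec x₀ f j else Xrec x₀ f j

theorem phiF_eq_mul_phiX (j : ℕ) (x : ℝ) : phiF x₀ f j x = f x * phiX x₀ f j x := by
  unfold phiF phiX; split_ifs <;> rfl

theorem continuousOn_sq_zpow (hf : ContinuousOn f (Icc a b)) (hfne : ∀ x ∈ Icc a b, f x ≠ 0)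
    (m : ℤ) : ContinuousOn (fun s => (f s ^ 2) ^ m) (Icc a b) :=
  (hf.pow 2).zpow₀ m fun s hs => Or.inl (pow_ne_zero 2 (hfne s hs))

theorem norm_sq_zpow_neg_one_pow_le {z : ℂ} (hz : ‖z‖ ≤ K) (hz' : ‖z⁻¹‖ ≤ K) (n : ℕ) :
    ‖(z ^ 2) ^ ((-1 : ℤ) ^ n)‖ ≤ K ^ 2 := by
  rcases neg_one_pow_eq_or ℤ n with h | h
  · simpa [h] using pow_le_pow_left₀ (norm_nonneg _) hz 2
  · simpa [h] using pow_le_pow_left₀ (norm_nonneg _) hz' 2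

theorem continuousOn_phiX_psiX (hf : ContinuousOn f (Icc a b))
    (hfne : ∀ x ∈ Icc a b, f x ≠ 0) (hx₀ : x₀ ∈ Icc a b) (j : ℕ) :
    ContinuousOn (phiX x₀ f j) (Icc a b) ∧ ContinuousOn (psiX x₀ f j) (Icc a b) := by
  have hW (n : ℕ) := continuousOn_sq_zpow hf hfne ((-1 : ℤ) ^ n)
  have hX := continuousOn_iterIntegral (G := Xrec x₀ f) hx₀ (fun n => hW (n + 1))
    (fun _ => rfl) (fun _ _ => rfl) j
  have hXt := continuousOn_iterIntegral (G := Xtrec x₀ f) hx₀ hW (fun _ => rfl) (fun _ _ => rfl) j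
  unfold phiX psiX; split_ifs <;> exact ⟨‹_›, ‹_›⟩

theorem norm_phiX_psiX_le (hf : ContinuousOn f (Icc a b)) (hfne : ∀ x ∈ Icc a b, f x ≠ 0)
    (hK : ∀ x ∈ Icc a b, ‖f x‖ ≤ K ∧ ‖(f x)⁻¹‖ ≤ K) (hx₀ : x₀ ∈ Icc a b) (j : ℕ) {x : ℝ}
    (hx : x ∈ Icc a b) :
    ‖phiX x₀ f j x‖ ≤ (K ^ 2 * |x - x₀|) ^ j ∧ ‖psiX x₀ f j x‖ ≤ (K ^ 2 * |x - x₀|) ^ j := by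
  have hWc (n : ℕ) := continuousOn_sq_zpow hf hfne ((-1 : ℤ) ^ n)
  have hW : ∀ n, ∀ s ∈ Icc a b, ‖(f s ^ 2) ^ ((-1 : ℤ) ^ n)‖ ≤ K ^ 2 :=
    fun n s hs => norm_sq_zpow_neg_one_pow_le (hK s hs).1 (hK s hs).2 n
  have hX := norm_iterIntegral_le (G := Xrec x₀ f) hx₀ (fun n => hWc (n + 1))
    (fun n => hW (n + 1)) (fun _ => rfl) (fun _ _ => rfl) j x hx
  have hXt := norm_iterIntegral_le (G := Xtrec x₀ f) hx₀ hWc hW (fun _ => rfl) (fun _ _ => rfl) j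
    x hx
  unfold phiX psiX; split_ifs <;> exact ⟨‹_›, ‹_›⟩

theorem phiX_psiX_self (j : ℕ) :
    phiX x₀ f (j + 1) x₀ = 0 ∧ psiX x₀ f (j + 1) x₀ = 0 := by
  have hX := iterIntegral_succ_self (G := Xrec x₀ f) (fun _ _ => rfl) j
  have hXt := iterIntegral_succ_self (G := Xtrec x₀ f) (fun _ _ => rfl) j
  unfold phiX psiX; split_ifs <;> exact ⟨‹_›, ‹_›⟩

theorem hasDerivWithinAt_phiX_psiX (hf : ContinuousOn f (Icc a b))
    (hfne : ∀ x ∈ Icc a b, f x ≠ 0) (hx₀ : x₀ ∈ Icc a b) (j : ℕ) {x : ℝ} (hx : x ∈ Icc a b) :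
    HasDerivWithinAt (phiX x₀ f j) (j * psiX x₀ f (j - 1) x / f x ^ 2) (Icc a b) x ∧
      HasDerivWithinAt (psiX x₀ f j) (j * phiX x₀ f (j - 1) x * f x ^ 2) (Icc a b) x := by
  cases j with
  | zero =>
    simpa [phiX, psiX, Xrec, Xtrec] using hasDerivWithinAt_const x (Icc a b) (1 : ℂ)
  | succ m =>
    have hW (n : ℕ) := continuousOn_sq_zpow hf hfne ((-1 : ℤ) ^ n)
    have hX := hasDerivWithinAt_iterIntegral_succ (G := Xrec x₀ f) hx₀ (fun _ _ => rfl)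
      ((continuousOn_iterIntegral hx₀ (fun n => hW (n + 1)) (fun _ => rfl) (fun _ _ => rfl)
        m).mul (hW (m + 1))) hx
    have hXt := hasDerivWithinAt_iterIntegral_succ (G := Xtrec x₀ f) hx₀ (fun _ _ => rfl)
      ((continuousOn_iterIntegral hx₀ hW (fun _ => rfl) (fun _ _ => rfl) m).mul (hW m)) hx
    have hfx : f x ^ 2 ≠ 0 := pow_ne_zero 2 (hfne x hx)
    simp only [Nat.add_sub_cancel, Nat.cast_add, Nat.cast_one]
    rcases Nat.even_or_odd m with hm | hm
    · have hm' : ¬Odd m := Nat.not_odd_iff_even.2 hm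
      simp only [phiX, psiX, if_pos hm.add_one, if_neg hm'] at hX hXt ⊢
      rw [hm.add_one.neg_one_pow, zpow_neg_one] at hX
      rw [hm.neg_one_pow, zpow_one] at hXt
      exact ⟨hX.congr_deriv (by field_simp), hXt.congr_deriv (by ring)⟩
    · have hm' : ¬Odd (m + 1) := Nat.not_odd_iff_even.2 hm.add_one
      simp only [phiX, psiX, if_pos hm, if_neg hm'] at hX hXt ⊢
      rw [hm.add_one.neg_one_pow, zpow_one] at hX
      rw [hm.neg_one_pow, zpow_neg_one] at hXt
      exact ⟨hXt.congr_deriv (by field_simp), hX.congr_deriv (by ring)⟩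

end Factors

section Phi
variable {a b x₀ K R : ℝ} {f f' q : ℝ → ℂ}

noncomputable def dphiF (x₀ : ℝ) (f f' : ℝ → ℂ) (j : ℕ) (x : ℝ) : ℂ :=
  f' x * phiX x₀ f j x + j * psiX x₀ f (j - 1) x / f x

/-- `φ_j''` when `f'' = q f`; for `j < 2` the truncated index `j - 2` is harmless since
`j * (j - 1) = 0`. -/
noncomputable def ddphiF (x₀ : ℝ) (f q : ℝ → ℂ) (j : ℕ) (x : ℝ) : ℂ :=
  q x * phiF x₀ f j x + j * (j - 1 : ℕ) * phiF x₀ f (j - 2) x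

theorem phiF_zero (x : ℝ) : phiF x₀ f 0 x = f x := by
  simp [phiF, Xtrec]

theorem dphiF_zero (x : ℝ) : dphiF x₀ f f' 0 x = f' x := by
  simp [dphiF, phiX, Xtrec]

theorem phiF_succ_self (j : ℕ) : phiF x₀ f (j + 1) x₀ = 0 := by
  rw [phiF_eq_mul_phiX, (phiX_psiX_self j).1, mul_zero]

theorem dphiF_one_self : dphiF x₀ f f' 1 x₀ = 1 / f x₀ := by
  simp [dphiF, (phiX_psiX_self 0).1, psiX, Xrec]

theorem dphiF_add_two_self (j : ℕ) : dphiF x₀ f f' (j + 2) x₀ = 0 := by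
  simp [dphiF, (phiX_psiX_self (j + 1)).1, (phiX_psiX_self j).2]

theorem hasDerivWithinAt_phiF (hf : ∀ x ∈ Icc a b, HasDerivWithinAt f (f' x) (Icc a b) x)
    (hfne : ∀ x ∈ Icc a b, f x ≠ 0) (hx₀ : x₀ ∈ Icc a b) (j : ℕ) {x : ℝ} (hx : x ∈ Icc a b) :
    HasDerivWithinAt (phiF x₀ f j) (dphiF x₀ f f' j x) (Icc a b) x := by
  have hfc : ContinuousOn f (Icc a b) := fun y hy => (hf y hy).continuousWithinAt
  rw [show phiF x₀ f j = fun y => f y * phiX x₀ f j y from funext (phiF_eq_mul_phiX j)]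
  refine ((hf x hx).mul (hasDerivWithinAt_phiX_psiX hfc hfne hx₀ j hx).1).congr_deriv ?_
  simp only [dphiF]
  field_simp [hfne x hx]

theorem hasDerivAt_dphiF (hf : ∀ x ∈ Icc a b, HasDerivWithinAt f (f' x) (Icc a b) x)
    (hf' : ∀ x ∈ Ioo a b, HasDerivAt f' (q x * f x) x) (hfne : ∀ x ∈ Icc a b, f x ≠ 0)
    (hx₀ : x₀ ∈ Icc a b) (j : ℕ) {x : ℝ} (hx : x ∈ Ioo a b) :
    HasDerivAt (dphiF x₀ f f' j) (ddphiF x₀ f q j x) x := by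
  have hfc : ContinuousOn f (Icc a b) := fun y hy => (hf y hy).continuousWithinAt
  have hxI := Ioo_subset_Icc_self hx
  have hnhds : Icc a b ∈ 𝓝 x := Icc_mem_nhds hx.1 hx.2
  have hphi := (hasDerivWithinAt_phiX_psiX hfc hfne hx₀ j hxI).1.hasDerivAt hnhds
  have hpsi := (hasDerivWithinAt_phiX_psiX hfc hfne hx₀ (j - 1) hxI).2.hasDerivAt hnhds
  refine (((hf' x hx).mul hphi).add ((hpsi.const_mul (j : ℂ)).div
    ((hf x hxI).hasDerivAt hnhds) (hfne x hxI))).congr_deriv ?_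
  rw [ddphiF, phiF_eq_mul_phiX, phiF_eq_mul_phiX, Nat.sub_sub]
  field_simp [hfne x hxI]
  ring

theorem continuousOn_phiF (hf : ContinuousOn f (Icc a b)) (hfne : ∀ x ∈ Icc a b, f x ≠ 0)
    (hx₀ : x₀ ∈ Icc a b) (j : ℕ) : ContinuousOn (phiF x₀ f j) (Icc a b) :=
  (hf.mul (continuousOn_phiX_psiX hf hfne hx₀ j).1).congr fun x _ => phiF_eq_mul_phiX j x

theorem continuousOn_dphiF (hf : ContinuousOn f (Icc a b)) (hf' : ContinuousOn f' (Icc a b))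
    (hfne : ∀ x ∈ Icc a b, f x ≠ 0) (hx₀ : x₀ ∈ Icc a b) (j : ℕ) :
    ContinuousOn (dphiF x₀ f f' j) (Icc a b) :=
  (hf'.mul (continuousOn_phiX_psiX hf hfne hx₀ j).1).add
    ((continuousOn_const.mul (continuousOn_phiX_psiX hf hfne hx₀ (j - 1)).2).div hf hfne)

theorem continuousOn_ddphiF (hq : ContinuousOn q (Icc a b)) (hf : ContinuousOn f (Icc a b))
    (hfne : ∀ x ∈ Icc a b, f x ≠ 0) (hx₀ : x₀ ∈ Icc a b) (j : ℕ) :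
    ContinuousOn (ddphiF x₀ f q j) (Icc a b) :=
  (hq.mul (continuousOn_phiF hf hfne hx₀ j)).add
    (continuousOn_const.mul (continuousOn_phiF hf hfne hx₀ (j - 2)))

theorem norm_phiF_dphiF_ddphiF_le
    (hK : ∀ x ∈ Icc a b, ‖f x‖ ≤ K ∧ ‖(f x)⁻¹‖ ≤ K ∧ ‖f' x‖ ≤ K ∧ ‖q x‖ ≤ K) (hR : 1 ≤ R)
    (hX : ∀ j, ∀ x ∈ Icc a b, ‖phiX x₀ f j x‖ ≤ R ^ j ∧ ‖psiX x₀ f j x‖ ≤ R ^ j)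
    (j : ℕ) {x : ℝ} (hx : x ∈ Icc a b) :
    ‖phiF x₀ f j x‖ ≤ (K + K ^ 2) * ((j : ℝ) + 1) ^ 2 * R ^ j ∧
      ‖dphiF x₀ f f' j x‖ ≤ (K + K ^ 2) * ((j : ℝ) + 1) ^ 2 * R ^ j ∧
      ‖ddphiF x₀ f q j x‖ ≤ (K + K ^ 2) * ((j : ℝ) + 1) ^ 2 * R ^ j := by
  obtain ⟨hf, hfinv, hf', hq⟩ := hK x hx
  have hK0 : 0 ≤ K := (norm_nonneg _).trans hf
  have hRj (i : ℕ) (hi : i ≤ j) : R ^ i ≤ R ^ j := pow_le_pow_right₀ hR hi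
  have hphi (i : ℕ) (hi : i ≤ j) : ‖phiF x₀ f i x‖ ≤ K * R ^ j := by
    rw [phiF_eq_mul_phiX, norm_mul]
    exact mul_le_mul hf (((hX i x hx).1).trans (hRj i hi)) (norm_nonneg _) hK0
  have hj : (0 : ℝ) ≤ j := j.cast_nonneg
  refine ⟨?_, ?_, ?_⟩
  · calc ‖phiF x₀ f j x‖ ≤ K * R ^ j := hphi j le_rfl
      _ ≤ (K + K ^ 2) * ((j : ℝ) + 1) ^ 2 * R ^ j := by
          gcongr
          nlinarith [mul_nonneg hK0 (mul_nonneg hj (by linarith : (0 : ℝ) ≤ j + 2)),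
            mul_nonneg (sq_nonneg K) (sq_nonneg ((j : ℝ) + 1))]
  · calc ‖dphiF x₀ f f' j x‖
        ≤ ‖f' x‖ * ‖phiX x₀ f j x‖ + j * (‖psiX x₀ f (j - 1) x‖ * ‖(f x)⁻¹‖) := by
          rw [dphiF, div_eq_mul_inv, mul_assoc]
          refine (norm_add_le _ _).trans ?_
          rw [norm_mul, norm_mul, norm_mul, Complex.norm_natCast]
      _ ≤ K * R ^ j + j * (R ^ j * K) := by
          gcongr
          exacts [(hX j x hx).1, (hX _ x hx).2.trans (hRj _ (Nat.sub_le j 1))]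
      _ = K * (j + 1) * R ^ j := by ring
      _ ≤ (K + K ^ 2) * ((j : ℝ) + 1) ^ 2 * R ^ j := by gcongr <;> nlinarith
  · calc ‖ddphiF x₀ f q j x‖
        ≤ ‖q x‖ * ‖phiF x₀ f j x‖ + j * (j - 1 : ℕ) * ‖phiF x₀ f (j - 2) x‖ := by
          refine (norm_add_le _ _).trans ?_
          rw [norm_mul, norm_mul, norm_mul, Complex.norm_natCast, Complex.norm_natCast]
      _ ≤ K * (K * R ^ j) + j * j * (K * R ^ j) := by
          have hj1 : ((j - 1 : ℕ) : ℝ) ≤ j := Nat.cast_le.2 (Nat.sub_le j 1)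
          exact add_le_add (mul_le_mul hq (hphi j le_rfl) (norm_nonneg _) hK0)
            (mul_le_mul (mul_le_mul_of_nonneg_left hj1 hj) (hphi _ (Nat.sub_le j 2))
              (norm_nonneg _) (by positivity))
      _ = (K ^ 2 + j ^ 2 * K) * R ^ j := by ring
      _ ≤ (K + K ^ 2) * ((j : ℝ) + 1) ^ 2 * R ^ j := by gcongr; nlinarith

end Phi

section SppsSeries
variable {a b x₀ : ℝ} {f f' q : ℝ → ℂ} {lam : ℂ} {p : ℕ}

noncomputable def sppsCoeff (lam : ℂ) (p k : ℕ) : ℂ := lam ^ k / ((2 * k + p).factorial : ℂ)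

noncomputable def sppsSum (x₀ : ℝ) (f : ℝ → ℂ) (lam : ℂ) (p : ℕ) (x : ℝ) : ℂ :=
  ∑' k, sppsCoeff lam p k * phiF x₀ f (2 * k + p) x

theorem norm_sppsCoeff_mul_le {z : ℂ} {B R : ℝ} (hB : 0 ≤ B) (hR : 0 ≤ R) (k : ℕ)
    (hz : ‖z‖ ≤ B * (((2 * k + p : ℕ) : ℝ) + 1) ^ 2 * R ^ (2 * k + p)) :
    ‖sppsCoeff lam p k * z‖ ≤ B * (4 * R) ^ p * ((‖lam‖ * (4 * R) ^ 2) ^ k / k.factorial) := by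
  have hpow : (((2 * k + p : ℕ) : ℝ) + 1) ^ 2 ≤ 4 ^ (2 * k + p) := by
    have : ((2 * k + p : ℕ) : ℝ) + 1 ≤ 2 ^ (2 * k + p) := by
      exact_mod_cast Nat.lt_two_pow_self
    calc _ ≤ ((2 : ℝ) ^ (2 * k + p)) ^ 2 := by gcongr
      _ = 4 ^ (2 * k + p) := by rw [← pow_mul, mul_comm, pow_mul]; norm_num
  have hfact : (k.factorial : ℝ) ≤ (2 * k + p).factorial := by
    exact_mod_cast Nat.factorial_le (by omega)
  calc ‖sppsCoeff lam p k * z‖ = ‖lam‖ ^ k / (2 * k + p).factorial * ‖z‖ := by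
        rw [sppsCoeff, norm_mul, norm_div, norm_pow, Complex.norm_natCast]
    _ ≤ ‖lam‖ ^ k / k.factorial * (B * 4 ^ (2 * k + p) * R ^ (2 * k + p)) := by
        gcongr
        exact hz.trans (by gcongr)
    _ = B * (4 * R) ^ p * ((‖lam‖ * (4 * R) ^ 2) ^ k / k.factorial) := by
        rw [pow_add (4 : ℝ), pow_mul]
        ring

theorem exists_summable_bound_sppsTerms (hx₀ : x₀ ∈ Icc a b) (hq : ContinuousOn q (Icc a b))
    (hf : ContinuousOn f (Icc a b)) (hf' : ContinuousOn f' (Icc a b))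
    (hfne : ∀ x ∈ Icc a b, f x ≠ 0) (lam : ℂ) (p : ℕ) :
    ∃ u : ℕ → ℝ, Summable u ∧ ∀ k, ∀ x ∈ Icc a b,
      ‖sppsCoeff lam p k * phiF x₀ f (2 * k + p) x‖ ≤ u k ∧
      ‖sppsCoeff lam p k * dphiF x₀ f f' (2 * k + p) x‖ ≤ u k ∧
      ‖sppsCoeff lam p k * ddphiF x₀ f q (2 * k + p) x‖ ≤ u k := by
  have hcont : ContinuousOn (fun x => ‖f x‖ + ‖(f x)⁻¹‖ + ‖f' x‖ + ‖q x‖) (Icc a b) :=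
    ((hf.norm.add (hf.inv₀ hfne).norm).add hf'.norm).add hq.norm
  obtain ⟨K, hK⟩ := isCompact_Icc.exists_bound_of_continuousOn hcont
  have hK' : ∀ x ∈ Icc a b, ‖f x‖ ≤ K ∧ ‖(f x)⁻¹‖ ≤ K ∧ ‖f' x‖ ≤ K ∧ ‖q x‖ ≤ K := by
    intro x hx
    have := (le_abs_self _).trans ((Real.norm_eq_abs _).symm.trans_le (hK x hx))
    refine ⟨?_, ?_, ?_, ?_⟩ <;> linarith [norm_nonneg (f x), norm_nonneg (f x)⁻¹,
      norm_nonneg (f' x), norm_nonneg (q x)]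
  set R := K ^ 2 * (b - a) + 1
  have hR : 1 ≤ R := by nlinarith [hx₀.1.trans hx₀.2, sq_nonneg K]
  have hX : ∀ j, ∀ x ∈ Icc a b, ‖phiX x₀ f j x‖ ≤ R ^ j ∧ ‖psiX x₀ f j x‖ ≤ R ^ j := by
    intro j x hx
    have hdist : |x - x₀| ≤ b - a :=
      abs_sub_le_iff.2 ⟨by linarith [hx.2, hx₀.1], by linarith [hx.1, hx₀.2]⟩
    have hpow : (K ^ 2 * |x - x₀|) ^ j ≤ R ^ j :=
      pow_le_pow_left₀ (by positivity) (by nlinarith [sq_nonneg K]) j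
    obtain ⟨h1, h2⟩ := norm_phiX_psiX_le hf hfne (fun x hx => ⟨(hK' x hx).1, (hK' x hx).2.1⟩)
      hx₀ j hx
    exact ⟨h1.trans hpow, h2.trans hpow⟩
  refine ⟨fun k => (K + K ^ 2) * (4 * R) ^ p * ((‖lam‖ * (4 * R) ^ 2) ^ k / k.factorial),
    (Real.summable_pow_div_factorial _).mul_left _, fun k x hx => ?_⟩
  have hB : 0 ≤ K + K ^ 2 := add_nonneg ((norm_nonneg _).trans (hK' x hx).1) (sq_nonneg K)
  have hR0 : 0 ≤ R := by linarith
  obtain ⟨h1, h2, h3⟩ := norm_phiF_dphiF_ddphiF_le hK' hR hX (2 * k + p) hx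
  exact ⟨norm_sppsCoeff_mul_le hB hR0 k h1, norm_sppsCoeff_mul_le hB hR0 k h2,
    norm_sppsCoeff_mul_le hB hR0 k h3⟩

theorem sppsCoeff_succ_mul (lam : ℂ) (p k : ℕ) :
    sppsCoeff lam p (k + 1) * ((2 * (k + 1) + p : ℕ) * (2 * (k + 1) + p - 1 : ℕ))
      = lam * sppsCoeff lam p k := by
  rw [sppsCoeff, sppsCoeff, show 2 * (k + 1) + p = 2 * k + p + 1 + 1 by ring]
  generalize 2 * k + p = n
  have h1 : ((n + 1 : ℕ) : ℂ) ≠ 0 := Nat.cast_ne_zero.2 n.succ_ne_zero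
  have h2 : ((n + 1 + 1 : ℕ) : ℂ) ≠ 0 := Nat.cast_ne_zero.2 (n + 1).succ_ne_zero
  have h3 : (n.factorial : ℂ) ≠ 0 := Nat.cast_ne_zero.2 n.factorial_ne_zero
  rw [Nat.add_sub_cancel, Nat.factorial_succ, Nat.factorial_succ, Nat.cast_mul, Nat.cast_mul]
  field_simp
  ring

theorem hasSum_sppsCoeff_mul_ddphiF (hp : p ≤ 1) {x : ℝ}
    (hs : Summable fun k => sppsCoeff lam p k * phiF x₀ f (2 * k + p) x) :
    HasSum (fun k => sppsCoeff lam p k * ddphiF x₀ f q (2 * k + p) x)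
      ((q x + lam) * sppsSum x₀ f lam p x) := by
  set g : ℕ → ℂ := fun k => sppsCoeff lam p k *
    ((2 * k + p : ℕ) * (2 * k + p - 1 : ℕ) * phiF x₀ f (2 * k + p - 2) x)
  have hg : HasSum g (lam * sppsSum x₀ f lam p x) := by
    have hp' : (p : ℂ) * ((p - 1 : ℕ) : ℂ) = 0 := by interval_cases p <;> simp
    have hg0 : g 0 = 0 := by simp [g, hp']
    rw [← hasSum_nat_add_iff' 1, Finset.sum_range_one, hg0, sub_zero]
    refine (hs.hasSum.mul_left lam).congr_fun fun k => ?_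
    simp only [g]
    rw [show 2 * (k + 1) + p - 2 = 2 * k + p by omega]
    linear_combination phiF x₀ f (2 * k + p) x * sppsCoeff_succ_mul lam p k
  rw [add_mul]
  refine ((hs.hasSum.mul_left (q x)).add hg).congr_fun fun k => ?_
  simp only [ddphiF, g]
  ring

theorem sppsSum_solves_initialValueProblem (hab : a < b) (hx₀ : x₀ ∈ Icc a b)
    (hq : ContinuousOn q (Icc a b))
    (hf : ∀ x ∈ Icc a b, HasDerivWithinAt f (f' x) (Icc a b) x) (hf' : ContinuousOn f' (Icc a b))
    (hf'' : ∀ x ∈ Ioo a b, HasDerivAt f' (q x * f x) x) (hfne : ∀ x ∈ Icc a b, f x ≠ 0)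
    (lam : ℂ) (hp : p ≤ 1) :
    TendstoUniformlyOn
      (fun N x => ∑ k ∈ Finset.range N, sppsCoeff lam p k * phiF x₀ f (2 * k + p) x)
      (sppsSum x₀ f lam p) atTop (Icc a b) ∧
    ContDiffOn ℝ 1 (sppsSum x₀ f lam p) (Icc a b) ∧
    ContDiffOn ℝ 2 (sppsSum x₀ f lam p) (Ioo a b) ∧
    (∀ x ∈ Ioo a b, derivWithin (derivWithin (sppsSum x₀ f lam p) (Icc a b)) (Icc a b) x
        - q x * sppsSum x₀ f lam p x = lam * sppsSum x₀ f lam p x) ∧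
    sppsSum x₀ f lam p x₀ = phiF x₀ f p x₀ ∧
    derivWithin (sppsSum x₀ f lam p) (Icc a b) x₀ = dphiF x₀ f f' p x₀ := by
  have hfc : ContinuousOn f (Icc a b) := fun x hx => (hf x hx).continuousWithinAt
  obtain ⟨u, hu, hbound⟩ := exists_summable_bound_sppsTerms hx₀ hq hfc hf' hfne lam p
  obtain ⟨hderiv, hC1, hC2, hderiv2⟩ := contDiffOn_tsum_Icc_Ioo hab hu
    (F := fun k x => sppsCoeff lam p k * phiF x₀ f (2 * k + p) x)
    (F' := fun k x => sppsCoeff lam p k * dphiF x₀ f f' (2 * k + p) x)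
    (F'' := fun k x => sppsCoeff lam p k * ddphiF x₀ f q (2 * k + p) x)
    (fun k x hx => (hbound k x hx).1) (fun k x hx => (hbound k x hx).2.1)
    (fun k x hx => (hbound k x (Ioo_subset_Icc_self hx)).2.2)
    (fun k x hx => (hasDerivWithinAt_phiF hf hfne hx₀ _ hx).const_mul _)
    (fun k => continuousOn_const.mul (continuousOn_dphiF hfc hf' hfne hx₀ _))
    (fun k x hx => (hasDerivAt_dphiF hf hf'' hfne hx₀ _ hx).const_mul _)
    (fun k => (continuousOn_const.mul (continuousOn_ddphiF hq hfc hfne hx₀ _)).mono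
      Ioo_subset_Icc_self)
  have hcoeff : sppsCoeff lam p 0 = 1 := by simp [sppsCoeff, Nat.factorial_eq_one.2 hp]
  unfold sppsSum
  refine ⟨tendstoUniformlyOn_tsum_nat hu fun k x hx => (hbound k x hx).1, hC1, hC2,
    fun x hx => ?_, ?_, ?_⟩
  · have hs : Summable fun k => sppsCoeff lam p k * phiF x₀ f (2 * k + p) x :=
      .of_norm_bounded hu fun k => (hbound k x (Ioo_subset_Icc_self hx)).1
    rw [sub_eq_iff_eq_add, ← add_mul, hderiv2 x hx, (hasSum_sppsCoeff_mul_ddphiF hp hs).tsum_eq,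
      add_comm]
    rfl
  · rw [tsum_eq_single 0 fun k hk => ?_]
    · simp [hcoeff]
    · obtain ⟨m, rfl⟩ := Nat.exists_eq_succ_of_ne_zero hk
      rw [show 2 * (m + 1) + p = 2 * m + p + 1 + 1 by ring, phiF_succ_self, mul_zero]
  · rw [(hderiv x₀ hx₀).derivWithin (uniqueDiffOn_Icc hab x₀ hx₀),
      tsum_eq_single 0 fun k hk => ?_]
    · simp [hcoeff]
    · obtain ⟨m, rfl⟩ := Nat.exists_eq_succ_of_ne_zero hk
      rw [show 2 * (m + 1) + p = 2 * m + p + 2 by ring, dphiF_add_two_self, mul_zero]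

theorem sppsY1_eq_sppsSum : sppsY1 x₀ f lam = sppsSum x₀ f lam 0 :=
  rfl

theorem sppsY2_eq_sppsSum : sppsY2 x₀ f lam = sppsSum x₀ f lam 1 :=
  rfl

end SppsSeries

/-- the SPPS series converge uniformly on `[a,b]`; the sums `y₁, y₂` are in
`C²(a,b) ∩ C¹[a,b]`, solve `y'' − q y = λ y` on `(a,b)` and satisfy the stated initial
conditions at `x₀`. -/
theorem spps_representation
    (a b : ℝ) (hab : a < b) (q : ℝ → ℂ) (hq : ContinuousOn q (Set.Icc a b))
    (f : ℝ → ℂ) (hf1 : ContDiffOn ℝ 1 f (Set.Icc a b)) (hf2 : ContDiffOn ℝ 2 f (Set.Ioo a b))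
    (hfeq : ∀ x ∈ Set.Ioo a b,
      derivWithin (derivWithin f (Set.Icc a b)) (Set.Icc a b) x = q x * f x)
    (hfne : ∀ x ∈ Set.Icc a b, f x ≠ 0)
    (x₀ : ℝ) (hx₀ : x₀ ∈ Set.Icc a b) (lam : ℂ) :
    TendstoUniformlyOn
      (fun N x => ∑ k ∈ Finset.range N, lam ^ k / (Nat.factorial (2 * k) : ℂ) * phiF x₀ f (2 * k) x)
      (sppsY1 x₀ f lam) atTop (Set.Icc a b) ∧
    TendstoUniformlyOn
      (fun N x => ∑ k ∈ Finset.range N,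
        lam ^ k / (Nat.factorial (2 * k + 1) : ℂ) * phiF x₀ f (2 * k + 1) x)
      (sppsY2 x₀ f lam) atTop (Set.Icc a b) ∧
    ContDiffOn ℝ 1 (sppsY1 x₀ f lam) (Set.Icc a b) ∧
    ContDiffOn ℝ 2 (sppsY1 x₀ f lam) (Set.Ioo a b) ∧
    ContDiffOn ℝ 1 (sppsY2 x₀ f lam) (Set.Icc a b) ∧
    ContDiffOn ℝ 2 (sppsY2 x₀ f lam) (Set.Ioo a b) ∧
    (∀ x ∈ Set.Ioo a b,
      derivWithin (derivWithin (sppsY1 x₀ f lam) (Set.Icc a b)) (Set.Icc a b) x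
        - q x * sppsY1 x₀ f lam x = lam * sppsY1 x₀ f lam x) ∧
    (∀ x ∈ Set.Ioo a b,
      derivWithin (derivWithin (sppsY2 x₀ f lam) (Set.Icc a b)) (Set.Icc a b) x
        - q x * sppsY2 x₀ f lam x = lam * sppsY2 x₀ f lam x) ∧
    sppsY1 x₀ f lam x₀ = f x₀ ∧
    derivWithin (sppsY1 x₀ f lam) (Set.Icc a b) x₀ = derivWithin f (Set.Icc a b) x₀ ∧
    sppsY2 x₀ f lam x₀ = 0 ∧
    derivWithin (sppsY2 x₀ f lam) (Set.Icc a b) x₀ = 1 / f x₀ := by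
  have hf : ∀ x ∈ Icc a b, HasDerivWithinAt f (derivWithin f (Icc a b) x) (Icc a b) x :=
    fun x hx => (hf1.differentiableOn one_ne_zero x hx).hasDerivWithinAt
  have hf' := hf1.continuousOn_derivWithin (uniqueDiffOn_Icc hab) le_rfl
  have hf'' (x : ℝ) (hx : x ∈ Ioo a b) :
      HasDerivAt (derivWithin f (Icc a b)) (q x * f x) x :=
    hfeq x hx ▸ hf2.hasDerivAt_derivWithin_Icc hx
  obtain ⟨hu₁, hC1₁, hC2₁, hode₁, hy₁, hy₁'⟩ :=
    sppsSum_solves_initialValueProblem (p := 0) hab hx₀ hq hf hf' hf'' hfne lam zero_le_one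
  obtain ⟨hu₂, hC1₂, hC2₂, hode₂, hy₂, hy₂'⟩ :=
    sppsSum_solves_initialValueProblem (p := 1) hab hx₀ hq hf hf' hf'' hfne lam le_rfl
  rw [sppsY1_eq_sppsSum, sppsY2_eq_sppsSum]
  exact ⟨hu₁, hu₂, hC1₁, hC2₁, hC1₂, hC2₂, hode₁, hode₂, hy₁.trans (phiF_zero x₀),
    hy₁'.trans (dphiF_zero x₀), hy₂.trans (phiF_succ_self 0), hy₂'.trans dphiF_one_self⟩
end
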